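/- arXiv:2103.01828 — 4 statements merged into one kernel-verified Lean document; each statement's English description precedes it below -/
import Mathlib

section
/- Let f : (0,∞) → ℝ be convex with f(1) = 0, and suppose the limits A = lim_{x→0⁺} f(x) and B = lim_{x→0⁺} x·f(1/x) exist and are finite. Then for any probability mass functions P and Q on a finite nonempty set S with P(s) > 0 and Q(s) > 0 for all s ∈ S, the f-divergence satisfies D_f(P‖Q) = Σ_{s∈S} Q(s)·f(P(s)/Q(s)) ≤ A + B. -/
open Real Finset Filter

/-!
Convexity on the three points `t < x < 1/t`, scaled by `t`, and the limit `t → 0⁺` give the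
pointwise bound `f x ≤ A + x B`; weighting it by `Q s` at `x = P s / Q s` and summing gives
`A + B`.
-/

theorem ConvexOn.one_sub_sq_mul_le {f : ℝ → ℝ} (hf : ConvexOn ℝ (Set.Ioi 0) f) {t x : ℝ}
    (ht : 0 < t) (htx : t < x) (hxt : x * t < 1) :
    (1 - t ^ 2) * f x ≤ (1 - x * t) * f t + (x - t) * (t * f (1 / t)) := by
  have hx1t : x < 1 / t := by rwa [lt_div_iff₀ ht]
  have h := hf.secant_mono_aux1 ht (one_div_pos.2 ht : (1 / t) ∈ Set.Ioi 0) htx hx1t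
  have h' := mul_le_mul_of_nonneg_left h ht.le
  field_simp at h'
  linarith

theorem ConvexOn.le_add_mul_of_tendsto {f : ℝ → ℝ} {A B x : ℝ}
    (hf : ConvexOn ℝ (Set.Ioi 0) f)
    (hA : Tendsto f (nhdsWithin 0 (Set.Ioi 0)) (nhds A))
    (hB : Tendsto (fun t : ℝ => t * f (1 / t)) (nhdsWithin 0 (Set.Ioi 0)) (nhds B))
    (hx : 0 < x) :
    f x ≤ A + x * B := by
  have hlim {g : ℝ → ℝ} (hg : Continuous g) : Tendsto g (nhdsWithin 0 (Set.Ioi 0)) (nhds (g 0)) :=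
    hg.continuousWithinAt
  have hlhs : Tendsto (fun t : ℝ => (1 - t ^ 2) * f x) (nhdsWithin 0 (Set.Ioi 0)) (nhds (f x)) := by
    convert hlim (g := fun t : ℝ => (1 - t ^ 2) * f x) (by fun_prop) using 2
    simp
  have hrhs : Tendsto (fun t : ℝ => (1 - x * t) * f t + (x - t) * (t * f (1 / t)))
      (nhdsWithin 0 (Set.Ioi 0)) (nhds (A + x * B)) := by
    simpa using ((hlim (g := fun t : ℝ => 1 - x * t) (by fun_prop)).mul hA).add
      ((hlim (g := fun t : ℝ => x - t) (by fun_prop)).mul hB)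
  have hpos : ∀ᶠ t : ℝ in nhdsWithin 0 (Set.Ioi 0), 0 < t := self_mem_nhdsWithin
  have hlt_x : ∀ᶠ t in nhdsWithin 0 (Set.Ioi 0), t < x :=
    nhdsWithin_le_nhds (eventually_lt_nhds hx)
  have hmul_lt : ∀ᶠ t in nhdsWithin 0 (Set.Ioi 0), x * t < 1 :=
    (hlim (g := fun t : ℝ => x * t) (by fun_prop)).eventually_lt_const (by simp)
  refine le_of_tendsto_of_tendsto hlhs hrhs ?_
  filter_upwards [hpos, hlt_x, hmul_lt] with t ht htx hxt
  exact hf.one_sub_sq_mul_le ht htx hxt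

theorem fDiv_le_of_tendsto_general {S : Type*} [Fintype S]
    (f : ℝ → ℝ) (A B : ℝ)
    (hconv : ConvexOn ℝ (Set.Ioi (0 : ℝ)) f)
    (hA : Tendsto f (nhdsWithin (0 : ℝ) (Set.Ioi 0)) (nhds A))
    (hB : Tendsto (fun x : ℝ => x * f (1 / x)) (nhdsWithin (0 : ℝ) (Set.Ioi 0)) (nhds B))
    (P Q : S → ℝ)
    (hP_pos : ∀ s, 0 < P s) (hQ_pos : ∀ s, 0 < Q s)
    (hP_sum : ∑ s, P s = 1) (hQ_sum : ∑ s, Q s = 1) :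
    ∑ s, Q s * f (P s / Q s) ≤ A + B := by
  calc ∑ s, Q s * f (P s / Q s)
      ≤ ∑ s, (Q s * A + P s * B) := by
        refine sum_le_sum fun s _ => ?_
        have hbound := hconv.le_add_mul_of_tendsto hA hB (div_pos (hP_pos s) (hQ_pos s))
        calc Q s * f (P s / Q s) ≤ Q s * (A + P s / Q s * B) :=
              mul_le_mul_of_nonneg_left hbound (hQ_pos s).le
          _ = Q s * A + P s * B := by
              rw [mul_add, ← mul_assoc, mul_div_cancel₀ _ (hQ_pos s).ne']
    _ = A + B := by
        rw [sum_add_distrib, ← sum_mul, ← sum_mul, hP_sum, hQ_sum, one_mul, one_mul]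

/-- Upper bound on f-divergences: if `f` is convex on `(0,∞)` with `f 1 = 0`, and both
`f` and its conjugate `x ↦ x * f (1/x)` have finite limits `A` and `B` as `x → 0⁺`, then
the f-divergence `D_f(P‖Q) = ∑ s, Q s * f (P s / Q s)` is bounded above by `A + B`. -/
theorem fDiv_le_of_tendsto {S : Type*} [Fintype S] [Nonempty S]
    (f : ℝ → ℝ) (A B : ℝ)
    (hconv : ConvexOn ℝ (Set.Ioi (0 : ℝ)) f) (hf1 : f 1 = 0)
    (hA : Tendsto f (nhdsWithin (0 : ℝ) (Set.Ioi 0)) (nhds A))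
    (hB : Tendsto (fun x : ℝ => x * f (1 / x)) (nhdsWithin (0 : ℝ) (Set.Ioi 0)) (nhds B))
    (P Q : S → ℝ)
    (hP_pos : ∀ s, 0 < P s) (hQ_pos : ∀ s, 0 < Q s)
    (hP_sum : ∑ s, P s = 1) (hQ_sum : ∑ s, Q s = 1) :
    ∑ s, Q s * f (P s / Q s) ≤ A + B :=
  fDiv_le_of_tendsto_general f A B hconv hA hB P Q hP_pos hQ_pos hP_sum hQ_sum
end

section
/- Fix 0 < β < 1. The function f₁ : (0,∞) → ℝ defined by f₁(x) = x·log(x/((1−β)x+β)) is convex on (0,∞) and satisfies f₁(1) = 0. -/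
/-! With `a = 1 - β ≥ 0` and `b = β > 0`, `f₁ x = x log (x / (a x + b))` has second derivative
`b² / (x (a x + b)²) ≥ 0` on `(0, ∞)`, and `f₁ 1 = log (1 / (a + b)) = 0`. -/

open Real Set

section MulLogDivAffine

variable {a b x : ℝ}

lemma hasDerivAt_div_affine (hy : a * x + b ≠ 0) :
    HasDerivAt (fun x => x / (a * x + b)) (b / (a * x + b) ^ 2) x :=
  ((hasDerivAt_id' x).div (((hasDerivAt_id' x).const_mul a).add_const b) hy).congr_deriv
    (by ring)

lemma hasDerivAt_log_div_affine (hx : 0 < x) (hy : 0 < a * x + b) :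
    HasDerivAt (fun x => log (x / (a * x + b))) (b / (x * (a * x + b))) x :=
  ((hasDerivAt_div_affine hy.ne').log (div_pos hx hy).ne').congr_deriv (by field_simp)

lemma hasDerivAt_mul_log_div_affine (hx : 0 < x) (hy : 0 < a * x + b) :
    HasDerivAt (fun x => x * log (x / (a * x + b)))
      (log (x / (a * x + b)) + b / (a * x + b)) x :=
  ((hasDerivAt_id' x).mul (hasDerivAt_log_div_affine hx hy)).congr_deriv (by field_simp)

lemma hasDerivAt_log_div_affine_add_div_affine (hx : 0 < x) (hy : 0 < a * x + b) :
    HasDerivAt (fun x => log (x / (a * x + b)) + b / (a * x + b))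
      (b ^ 2 / (x * (a * x + b) ^ 2)) x :=
  ((hasDerivAt_log_div_affine hx hy).add ((hasDerivAt_const x b).div
    (((hasDerivAt_id' x).const_mul a).add_const b) hy.ne')).congr_deriv (by field_simp; ring)

theorem convexOn_mul_log_div_affine (ha : 0 ≤ a) (hb : 0 < b) :
    ConvexOn ℝ (Ioi 0) (fun x => x * log (x / (a * x + b))) := by
  have hy : ∀ x ∈ Ioi (0 : ℝ), 0 < a * x + b := fun x (hx : 0 < x) => by positivity
  refine convexOn_of_hasDerivWithinAt2_nonneg (convex_Ioi 0)
    (f' := fun x => log (x / (a * x + b)) + b / (a * x + b))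
    (f'' := fun x => b ^ 2 / (x * (a * x + b) ^ 2))
    (fun x hx => (hasDerivAt_mul_log_div_affine hx (hy x hx)).continuousAt.continuousWithinAt)
    ?_ ?_ ?_ <;> rw [interior_Ioi]
  · exact fun x hx => (hasDerivAt_mul_log_div_affine hx (hy x hx)).hasDerivWithinAt
  · exact fun x hx => (hasDerivAt_log_div_affine_add_div_affine hx (hy x hx)).hasDerivWithinAt
  · exact fun x (hx : 0 < x) => by positivity

end MulLogDivAffine

/-- The function `f₁(x) = x·log(x/((1−β)x+β))` is convex on `(0,∞)` and satisfies
`f₁(1) = 0`. -/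
theorem f1_convexOn_and_eq_zero_at_one (β : ℝ) (hβ0 : 0 < β) (hβ1 : β < 1)
    (f₁ : ℝ → ℝ) (hf₁ : ∀ x, f₁ x = x * Real.log (x / ((1 - β) * x + β))) :
    ConvexOn ℝ (Set.Ioi (0 : ℝ)) f₁ ∧ f₁ 1 = 0 := by
  obtain rfl : f₁ = fun x => x * log (x / ((1 - β) * x + β)) := funext hf₁
  exact ⟨convexOn_mul_log_div_affine (by linarith) hβ0, by simp⟩
end

section
/- Let S be a set, λ > 0, and let d_X and d_Z be metrics on S with d_Z(i,j) ≤ 1 for all i,j ∈ S. Then the function (d_X ⊖_λ d_Z), defined by (d_X ⊖_λ d_Z)(i,j) = d_X(i,j) − (λ/2)·d_Z(i,j) + λ for i ≠ j and (d_X ⊖_λ d_Z)(i,i) = 0, is a metric on S: it is non-negative, symmetric, satisfies (d_X ⊖_λ d_Z)(i,j) = 0 if and only if i = j, and satisfies the triangle inequality. -/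
/-- The Confetti operator `(d_X ⊖_λ d_Z)(i,j) = d_X(i,j) − (λ/2)·d_Z(i,j) + λ` for `i ≠ j`
(and `0` on the diagonal), built from metrics `d_X` and `d_Z` with `d_Z ≤ 1`, is a metric:
non-negative, symmetric, zero exactly on the diagonal, and satisfying the triangle
inequality. -/
theorem confetti_is_metric {S : Type*} [DecidableEq S] (lam : ℝ) (hlam : 0 < lam)
    (dX dZ : S → S → ℝ)
    (hX_nonneg : ∀ i j, 0 ≤ dX i j)
    (hX_symm : ∀ i j, dX i j = dX j i)
    (hX_eq : ∀ i j, dX i j = 0 ↔ i = j)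
    (hX_tri : ∀ i j k, dX i j ≤ dX i k + dX k j)
    (hZ_nonneg : ∀ i j, 0 ≤ dZ i j)
    (hZ_symm : ∀ i j, dZ i j = dZ j i)
    (hZ_eq : ∀ i j, dZ i j = 0 ↔ i = j)
    (hZ_tri : ∀ i j k, dZ i j ≤ dZ i k + dZ k j)
    (hZ_le : ∀ i j, dZ i j ≤ 1)
    (F : S → S → ℝ)
    (hF : ∀ i j, F i j = if i = j then 0 else dX i j - lam / 2 * dZ i j + lam) :
    (∀ i j, 0 ≤ F i j) ∧
    (∀ i j, F i j = F j i) ∧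
    (∀ i j, F i j = 0 ↔ i = j) ∧
    (∀ i j k, F i j ≤ F i k + F k j) := by
  have hpos : ∀ i j, i ≠ j → lam / 2 ≤ dX i j - lam / 2 * dZ i j + lam := by
    intro i j hij
    have h1 := hX_nonneg i j
    have h2 := hZ_le i j
    nlinarith
  have hnn : ∀ i j, 0 ≤ F i j := by
    intro i j
    rw [hF]
    split
    · exact le_refl 0
    · next h => linarith [hpos i j h]
  refine ⟨hnn, ?_, ?_, ?_⟩
  · intro i j
    rw [hF, hF, hX_symm, hZ_symm]
    by_cases h : i = j
    · simp [h]
    · simp [h, Ne.symm h]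
  · intro i j
    rw [hF]
    by_cases h : i = j
    · simp [h]
    · simp only [h, if_false]
      have : (0:ℝ) < dX i j - lam / 2 * dZ i j + lam := by linarith [hpos i j h]
      constructor
      · intro he; exact absurd he this.ne'
      · exact fun he => he.elim
  · intro i j k
    by_cases hij : i = j
    · rw [hF i j, if_pos hij]
      exact add_nonneg (hnn i k) (hnn k j)
    by_cases hik : i = k
    · subst hik
      rw [hF i i, if_pos rfl]; linarith
    by_cases hkj : k = j
    · subst hkj
      rw [hF k k, if_pos rfl]; linarith
    rw [hF i j, hF i k, hF k j, if_neg hij, if_neg hik, if_neg hkj]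
    have h1 := hX_tri i j k
    have h2 := hZ_nonneg i k
    have h3 := hZ_nonneg k j
    have h4 := hZ_le i k
    have h5 := hZ_le k j
    have h6 := hZ_nonneg i j
    have h7 := hX_nonneg i k
    have h8 := hX_nonneg k j
    nlinarith
end

section
/- Let n ≥ 2, 0 ≤ α ≤ 1, 0 < β < 1, and let (p'_{ij})_{i≠j} be fixed positive reals with p'_{ij} = p'_{ji} and Σ_{i≠j} p'_{ij} = 1. For points y_1, …, y_n ∈ ℝ^m, define q_{ij}(Y) = (1+‖y_i−y_j‖²)^{−1} / Σ_{k≠l} (1+‖y_k−y_l‖²)^{−1} and J(Y) = α·Σ_{i≠j} p'_{ij}·log(p'_{ij}/(β·q_{ij}+(1−β)·p'_{ij})) + (1−α)·Σ_{i≠j} q_{ij}·log(q_{ij}/(β·p'_{ij}+(1−β)·q_{ij})). Then J is differentiable in Y and its gradient with respect to y_i equals 4·Σ_{j≠i} (y_i−y_j)·(1+‖y_i−y_j‖²)^{−1}·q_{ij}·[ αβ·p'_{ij}/(β·q_{ij}+(1−β)·p'_{ij}) − Σ_{k≠l} αβ·p'_{kl}·q_{kl}/(β·q_{kl}+(1−β)·p'_{kl})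 + (1−α)·( −(1+log q_{ij}) + (1−β)·q_{ij}/(β·p'_{ij}+(1−β)·q_{ij}) + log(β·p'_{ij}+(1−β)·q_{ij}) ) + (1−α)·Σ_{k≠l} q_{kl}·( 1+log q_{kl} − (1−β)·q_{kl}/(β·p'_{kl}+(1−β)·q_{kl}) − log(β·p'_{kl}+(1−β)·q_{kl}) ) ]. -/
open Real Finset

/-- Low-dimensional tSNE similarities:
`q_{ij}(Y) = (1+‖y_i−y_j‖²)⁻¹ / Σ_{k≠l} (1+‖y_k−y_l‖²)⁻¹`. -/
noncomputable def qsim {n m : ℕ} (Y : Fin n → EuclideanSpace ℝ (Fin m)) (i j : Fin n) : ℝ :=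
  (1 + ‖Y i - Y j‖ ^ 2)⁻¹ /
    ∑ k, ∑ l ∈ Finset.univ.filter (fun l => l ≠ k), (1 + ‖Y k - Y l‖ ^ 2)⁻¹

/-- The parameterized Jensen–Shannon divergence between the prior similarities `p'` and
the embedding similarities `q(Y)` as a function of the embedding `Y`:
`J(Y) = α·Σ_{i≠j} p'_{ij}·log(p'_{ij}/(β·q_{ij}+(1−β)·p'_{ij}))
      + (1−α)·Σ_{i≠j} q_{ij}·log(q_{ij}/(β·p'_{ij}+(1−β)·q_{ij}))`. -/
noncomputable def jediJS {n m : ℕ} (α β : ℝ) (p' : Fin n → Fin n → ℝ)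
    (Y : Fin n → EuclideanSpace ℝ (Fin m)) : ℝ :=
  α * ∑ i, ∑ j ∈ Finset.univ.filter (fun j => j ≠ i),
        p' i j * Real.log (p' i j / (β * qsim Y i j + (1 - β) * p' i j))
    + (1 - α) * ∑ i, ∑ j ∈ Finset.univ.filter (fun j => j ≠ i),
        qsim Y i j * Real.log (qsim Y i j / (β * p' i j + (1 - β) * qsim Y i j))

/-!
`J` is a sum over ordered pairs `k ≠ l` of scalar functions `φ_{kl}(q_{kl})`, so its gradient
in `y_i` is `Σ φ'_{kl}(q_{kl}) ∇q_{kl}`. Writing `q_{kl} = w_{kl} / S` with the Cauchy kernel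
`w_{kl} = (1 + ‖y_k - y_l‖²)⁻¹` and `S = Σ_{k≠l} w_{kl}`, we get
`∇q_{kl} = (∇w_{kl} - q_{kl} ∇S) / S`, and `∇_{y_i} w_{kl}` vanishes unless `i ∈ {k, l}`, where it
is `-2 w_{ij}² (y_i - y_j)` with `j` the other index. Collecting the terms by `j` gives
`2 Σ_j w_{ij} q_{ij} (2 Σ_{k≠l} φ'_{kl} q_{kl} - φ'_{ij} - φ'_{ji}) (y_i - y_j)`, and the symmetry
of `p'` and `q` turns this into the stated formula.
-/

section GradientCalculus

variable {F : Type*} [NormedAddCommGroup F] [InnerProductSpace ℝ F] [CompleteSpace F]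
  {f g : F → ℝ} {a b x : F}

theorem HasGradientAt.fun_sum {ι : Type*} {s : Finset ι} {f : ι → F → ℝ} {a : ι → F}
    (h : ∀ j ∈ s, HasGradientAt (f j) (a j) x) :
    HasGradientAt (fun z => ∑ j ∈ s, f j z) (∑ j ∈ s, a j) x := by
  rw [hasGradientAt_iff_hasFDerivAt]
  simpa using HasFDerivAt.fun_sum fun j hj => (h j hj : HasFDerivAt _ _ _)

theorem HasGradientAt.fun_mul (hf : HasGradientAt f a x) (hg : HasGradientAt g b x) :
    HasGradientAt (fun z => f z * g z) (f x • b + g x • a) x := by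
  rw [hasGradientAt_iff_hasFDerivAt] at *
  simpa using hf.fun_mul hg

theorem HasDerivAt.comp_hasGradientAt {φ : ℝ → ℝ} {c : ℝ} (hf : HasGradientAt f a x)
    (hφ : HasDerivAt φ c (f x)) : HasGradientAt (fun z => φ (f z)) (c • a) x := by
  rw [hasGradientAt_iff_hasFDerivAt] at *
  simpa [Function.comp_def] using hφ.comp_hasFDerivAt x hf

theorem hasGradientAt_norm_sub_sq (c x : F) :
    HasGradientAt (fun z => ‖z - c‖ ^ 2) ((2 : ℝ) • (x - c)) x := by
  rw [hasGradientAt_iff_hasFDerivAt]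
  have hsub : HasFDerivAt (fun z : F => z - c) (ContinuousLinearMap.id ℝ F) x :=
    (hasFDerivAt_id x).sub_const c
  convert hsub.norm_sq using 1
  · rfl
  ext y
  simp [InnerProductSpace.toDual_apply_apply]

theorem hasGradientAt_inv_one_add_norm_sub_sq (c x : F) :
    HasGradientAt (fun z => (1 + ‖z - c‖ ^ 2)⁻¹)
      ((-2 * ((1 + ‖x - c‖ ^ 2)⁻¹) ^ 2) • (x - c)) x := by
  have hpos : (0 : ℝ) < 1 + ‖x - c‖ ^ 2 := by positivity
  have hinv : HasDerivAt (fun t : ℝ => (1 + t)⁻¹) (-1 / (1 + ‖x - c‖ ^ 2) ^ 2) (‖x - c‖ ^ 2) := by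
    simpa using ((hasDerivAt_id _).const_add 1).fun_inv hpos.ne'
  convert HasDerivAt.comp_hasGradientAt (hasGradientAt_norm_sub_sq c x) hinv using 1
  rw [smul_smul]
  congr 1
  field_simp

end GradientCalculus

section CauchyKernel

variable {F : Type*} [NormedAddCommGroup F] {n : ℕ}

noncomputable def kernelSum (Y : Fin n → F) : ℝ :=
  ∑ k, ∑ l with l ≠ k, (1 + ‖Y k - Y l‖ ^ 2)⁻¹

theorem kernelSum_pos (hn : 2 ≤ n) (Y : Fin n → F) : 0 < kernelSum Y := by
  have hcard : 1 < Fintype.card (Fin n) := by simp; omega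
  have : Nonempty (Fin n) := ⟨⟨0, by omega⟩⟩
  refine sum_pos (fun k _ => sum_pos (fun l _ => by positivity) ?_) univ_nonempty
  obtain ⟨l, hl⟩ := Fintype.exists_ne_of_one_lt_card hcard k
  exact ⟨l, by simp [hl]⟩

variable [InnerProductSpace ℝ F]

noncomputable def kernelGradLeft (Y : Fin n → F) (i j : Fin n) : F :=
  (-2 * ((1 + ‖Y i - Y j‖ ^ 2)⁻¹) ^ 2) • (Y i - Y j)

noncomputable def kernelGrad (Y : Fin n → F) (i k l : Fin n) : F :=
  (if k = i then kernelGradLeft Y i l else 0) + (if l = i then kernelGradLeft Y i k else 0)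

theorem sum_smul_kernelGrad (Y : Fin n → F) (i : Fin n) (c : Fin n → Fin n → ℝ) :
    ∑ k, ∑ l with l ≠ k, c k l • kernelGrad Y i k l
      = ∑ j with j ≠ i, (c i j + c j i) • kernelGradLeft Y i j := by
  simp only [kernelGrad, smul_add, smul_ite, smul_zero, sum_add_distrib, add_smul]
  congr 1
  · simp only [sum_ite_irrel, sum_const_zero, sum_ite_eq', mem_univ, if_true]
  · simp only [sum_ite_eq', mem_filter, mem_univ, true_and]
    rw [sum_filter]
    simp only [ne_comm]

theorem differentiable_kernel (k l : Fin n) :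
    Differentiable ℝ fun Y : Fin n → F => (1 + ‖Y k - Y l‖ ^ 2)⁻¹ :=
  ((((differentiable_apply (𝕜 := ℝ) k).sub (differentiable_apply l)).norm_sq ℝ).const_add 1).inv
    fun _ => by positivity

theorem differentiable_kernelSum : Differentiable ℝ fun Y : Fin n → F => kernelSum Y :=
  Differentiable.fun_sum fun k _ => Differentiable.fun_sum fun l _ => differentiable_kernel k l

variable [CompleteSpace F]

theorem hasGradientAt_kernel_update (Y : Fin n → F) (i k l : Fin n) :
    HasGradientAt (fun z => (1 + ‖Function.update Y i z k - Function.update Y i z l‖ ^ 2)⁻¹)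
      (kernelGrad Y i k l) (Y i) := by
  by_cases hk : k = i <;> by_cases hl : l = i
  · subst hk hl
    simpa [kernelGrad, kernelGradLeft] using hasGradientAt_const _ (1 : ℝ)
  · subst hk
    simpa [kernelGrad, kernelGradLeft, hl, Function.update_of_ne hl]
      using hasGradientAt_inv_one_add_norm_sub_sq (Y l) (Y k)
  · subst hl
    simpa [kernelGrad, kernelGradLeft, hk, Function.update_of_ne hk, norm_sub_rev (Y k)]
      using hasGradientAt_inv_one_add_norm_sub_sq (Y k) (Y l)
  · simpa [kernelGrad, hk, hl, Function.update_of_ne hk, Function.update_of_ne hl]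
      using hasGradientAt_const (Y i) _

theorem hasGradientAt_kernelSum_update (Y : Fin n → F) (i : Fin n) :
    HasGradientAt (fun z => kernelSum (Function.update Y i z))
      (∑ k, ∑ l with l ≠ k, kernelGrad Y i k l) (Y i) :=
  HasGradientAt.fun_sum fun k _ => HasGradientAt.fun_sum fun l _ =>
    hasGradientAt_kernel_update Y i k l

end CauchyKernel

section Similarities

variable {n m : ℕ}

theorem qsim_eq_div (Y : Fin n → EuclideanSpace ℝ (Fin m)) (k l : Fin n) :
    qsim Y k l = (1 + ‖Y k - Y l‖ ^ 2)⁻¹ / kernelSum Y :=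
  rfl

theorem qsim_pos (hn : 2 ≤ n) (Y : Fin n → EuclideanSpace ℝ (Fin m)) (k l : Fin n) :
    0 < qsim Y k l :=
  div_pos (by positivity) (kernelSum_pos hn Y)

theorem qsim_comm (Y : Fin n → EuclideanSpace ℝ (Fin m)) (k l : Fin n) :
    qsim Y k l = qsim Y l k := by
  rw [qsim_eq_div, qsim_eq_div, norm_sub_rev]

theorem differentiable_qsim (hn : 2 ≤ n) (k l : Fin n) :
    Differentiable ℝ fun Y : Fin n → EuclideanSpace ℝ (Fin m) => qsim Y k l := by
  simp only [qsim_eq_div, div_eq_mul_inv]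
  exact (differentiable_kernel k l).mul
    (differentiable_kernelSum.inv fun Y => (kernelSum_pos hn Y).ne')

theorem hasGradientAt_qsim_update (hn : 2 ≤ n) (Y : Fin n → EuclideanSpace ℝ (Fin m))
    (i k l : Fin n) :
    HasGradientAt (fun z => qsim (Function.update Y i z) k l)
      ((kernelSum Y)⁻¹ •
        (kernelGrad Y i k l - qsim Y k l • ∑ a, ∑ b with b ≠ a, kernelGrad Y i a b)) (Y i) := by
  have hinv := HasDerivAt.comp_hasGradientAt (hasGradientAt_kernelSum_update Y i)
    (hasDerivAt_inv (by rw [Function.update_eq_self]; exact (kernelSum_pos hn Y).ne'))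
  have hq := (hasGradientAt_kernel_update Y i k l).fun_mul hinv
  simp only [Function.update_eq_self] at hq
  simp only [qsim_eq_div, div_eq_mul_inv]
  convert hq using 1
  module

theorem hasGradientAt_sum_comp_qsim (hn : 2 ≤ n) (Y : Fin n → EuclideanSpace ℝ (Fin m))
    (i : Fin n) (φ : Fin n → Fin n → ℝ → ℝ) (d : Fin n → Fin n → ℝ)
    (hφ : ∀ k l, k ≠ l → HasDerivAt (φ k l) (d k l) (qsim Y k l)) :
    HasGradientAt (fun z => ∑ k, ∑ l with l ≠ k, φ k l (qsim (Function.update Y i z) k l))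
      ((2 : ℝ) • ∑ j with j ≠ i,
        ((1 + ‖Y i - Y j‖ ^ 2)⁻¹ * qsim Y i j *
          (2 * ∑ k, ∑ l with l ≠ k, d k l * qsim Y k l - d i j - d j i)) • (Y i - Y j)) (Y i) := by
  set D := ∑ k, ∑ l with l ≠ k, d k l * qsim Y k l
  set G := ∑ a, ∑ b with b ≠ a, kernelGrad Y i a b
  have hterm : ∀ k, ∀ l ∈ univ.filter (fun l => l ≠ k),
      HasGradientAt (fun z => φ k l (qsim (Function.update Y i z) k l))
        (d k l • ((kernelSum Y)⁻¹ • (kernelGrad Y i k l - qsim Y k l • G))) (Y i) :=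
    fun k l hl => HasDerivAt.comp_hasGradientAt (hasGradientAt_qsim_update hn Y i k l)
      (by rw [Function.update_eq_self]; exact hφ k l (mem_filter.1 hl).2.symm)
  have hG : G = ∑ j with j ≠ i, (1 + 1 : ℝ) • kernelGradLeft Y i j := by
    simpa using sum_smul_kernelGrad Y i (fun _ _ => 1)
  convert HasGradientAt.fun_sum fun k _ => HasGradientAt.fun_sum (hterm k) using 1
  calc _ = (kernelSum Y)⁻¹ • ∑ j with j ≠ i, (d i j + d j i - 2 * D) • kernelGradLeft Y i j := by
        rw [smul_sum, smul_sum]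
        refine sum_congr rfl fun j _ => ?_
        simp only [kernelGradLeft, qsim_eq_div]
        module
    _ = (kernelSum Y)⁻¹ • (∑ k, ∑ l with l ≠ k, d k l • kernelGrad Y i k l - D • G) := by
        rw [sum_smul_kernelGrad, hG]
        congr 1
        rw [smul_sum, ← sum_sub_distrib]
        refine sum_congr rfl fun j _ => ?_
        module
    _ = _ := by
        rw [sum_smul, ← sum_sub_distrib, smul_sum]
        refine sum_congr rfl fun k _ => ?_
        rw [sum_smul, ← sum_sub_distrib, smul_sum]
        refine sum_congr rfl fun l _ => ?_
        module

end Similarities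

section Divergence

noncomputable def pjsdTerm (α β p t : ℝ) : ℝ :=
  α * (p * log (p / (β * t + (1 - β) * p))) + (1 - α) * (t * log (t / (β * p + (1 - β) * t)))

noncomputable def pjsdTermDeriv (α β p t : ℝ) : ℝ :=
  -(α * β * p / (β * t + (1 - β) * p))
    + (1 - α) * (1 + log t - (1 - β) * t / (β * p + (1 - β) * t) - log (β * p + (1 - β) * t))

theorem hasDerivAt_pjsdTerm {α β p t : ℝ} (hβ0 : 0 ≤ β) (hβ1 : β ≤ 1) (hp : 0 < p)
    (ht : 0 < t) : HasDerivAt (pjsdTerm α β p) (pjsdTermDeriv α β p t) t := by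
  have hmix₁ : β * t + (1 - β) * p ≠ 0 :=
    (Set.mem_Ioi.1 (convex_Ioi 0 ht hp hβ0 (sub_nonneg.2 hβ1) (by ring))).ne'
  have hmix₂ : β * p + (1 - β) * t ≠ 0 :=
    (Set.mem_Ioi.1 (convex_Ioi 0 hp ht hβ0 (sub_nonneg.2 hβ1) (by ring))).ne'
  have hlin₁ : HasDerivAt (fun s => β * s + (1 - β) * p) β t := by
    simpa using ((hasDerivAt_id t).const_mul β).add_const ((1 - β) * p)
  have hlin₂ : HasDerivAt (fun s => β * p + (1 - β) * s) (1 - β) t := by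
    simpa using ((hasDerivAt_id t).const_mul (1 - β)).const_add (β * p)
  have hlog₁ := ((hasDerivAt_const t p).fun_div hlin₁ hmix₁).log (div_ne_zero hp.ne' hmix₁)
  have hlog₂ := ((hasDerivAt_id' t).fun_div hlin₂ hmix₂).log (div_ne_zero ht.ne' hmix₂)
  refine (((hlog₁.const_mul p).const_mul α).fun_add
    (((hasDerivAt_id' t).fun_mul hlog₂).const_mul (1 - α))).congr_deriv ?_
  rw [pjsdTermDeriv, log_div ht.ne' hmix₂]
  generalize β * t + (1 - β) * p = g at hmix₁ ⊢
  generalize β * p + (1 - β) * t = h at hmix₂ ⊢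
  field_simp
  ring

theorem jediJS_eq_sum_pjsdTerm {n m : ℕ} (α β : ℝ) (p' : Fin n → Fin n → ℝ)
    (Y : Fin n → EuclideanSpace ℝ (Fin m)) :
    jediJS α β p' Y = ∑ k, ∑ l with l ≠ k, pjsdTerm α β (p' k l) (qsim Y k l) := by
  simp only [jediJS, pjsdTerm, mul_sum, ← sum_add_distrib]

theorem sum_pjsdTermDeriv_mul {n : ℕ} (α β : ℝ) (p q : Fin n → Fin n → ℝ) :
    ∑ k, ∑ l with l ≠ k, pjsdTermDeriv α β (p k l) (q k l) * q k l
      = -(∑ k, ∑ l with l ≠ k, α * β * p k l * q k l / (β * q k l + (1 - β) * p k l))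
        + (1 - α) * ∑ k, ∑ l with l ≠ k,
            q k l * (1 + log (q k l) - (1 - β) * q k l / (β * p k l + (1 - β) * q k l)
              - log (β * p k l + (1 - β) * q k l)) := by
  simp only [mul_sum, ← sum_neg_distrib, ← sum_add_distrib]
  refine sum_congr rfl fun k _ => sum_congr rfl fun l _ => ?_
  simp only [pjsdTermDeriv]
  ring

end Divergence

theorem jedi_gradient_general {n m : ℕ} (hn : 2 ≤ n)
    (α β : ℝ) (hβ0 : 0 < β) (hβ1 : β < 1)
    (p' : Fin n → Fin n → ℝ)
    (hp_pos : ∀ i j, i ≠ j → 0 < p' i j)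
    (hp_symm : ∀ i j, p' i j = p' j i) :
    Differentiable ℝ (fun Y : Fin n → EuclideanSpace ℝ (Fin m) => jediJS α β p' Y) ∧
    ∀ (Y : Fin n → EuclideanSpace ℝ (Fin m)) (i : Fin n),
      HasGradientAt (fun z => jediJS α β p' (Function.update Y i z))
        ((4 : ℝ) • ∑ j ∈ Finset.univ.filter (fun j => j ≠ i),
          ((1 + ‖Y i - Y j‖ ^ 2)⁻¹ * qsim Y i j *
            (α * β * p' i j / (β * qsim Y i j + (1 - β) * p' i j)
              - (∑ k, ∑ l ∈ Finset.univ.filter (fun l => l ≠ k),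
                  α * β * p' k l * qsim Y k l / (β * qsim Y k l + (1 - β) * p' k l))
              + (1 - α) *
                (-(1 + Real.log (qsim Y i j))
                  + (1 - β) * qsim Y i j / (β * p' i j + (1 - β) * qsim Y i j)
                  + Real.log (β * p' i j + (1 - β) * qsim Y i j))
              + (1 - α) *
                (∑ k, ∑ l ∈ Finset.univ.filter (fun l => l ≠ k),
                  qsim Y k l *
                    (1 + Real.log (qsim Y k l)
                      - (1 - β) * qsim Y k l / (β * p' k l + (1 - β) * qsim Y k l)
                      - Real.log (β * p' k l + (1 - β) * qsim Y k l))))) •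
            (Y i - Y j))
        (Y i) := by
  have hφ : ∀ (Y : Fin n → EuclideanSpace ℝ (Fin m)) k l, k ≠ l →
      HasDerivAt (pjsdTerm α β (p' k l)) (pjsdTermDeriv α β (p' k l) (qsim Y k l)) (qsim Y k l) :=
    fun Y k l hkl => hasDerivAt_pjsdTerm hβ0.le hβ1.le (hp_pos k l hkl) (qsim_pos hn Y k l)
  simp only [jediJS_eq_sum_pjsdTerm]
  refine ⟨fun Y => ?_, fun Y i => ?_⟩
  · refine DifferentiableAt.fun_sum fun k _ => DifferentiableAt.fun_sum fun l hl => ?_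
    exact (hφ Y k l (mem_filter.1 hl).2.symm).differentiableAt.comp Y
      (differentiable_qsim hn k l Y)
  · convert hasGradientAt_sum_comp_qsim hn Y i _ _ (hφ Y) using 1
    rw [sum_pjsdTermDeriv_mul, smul_sum, smul_sum]
    refine sum_congr rfl fun j _ => ?_
    rw [hp_symm j i, qsim_comm Y j i, smul_smul, smul_smul]
    congr 1
    simp only [pjsdTermDeriv]
    ring

/-- The pJSD term of the Jedi objective is differentiable in the embedding `Y`, and its
gradient with respect to `y_i` is given by the closed-form expression derived in the
paper. -/
theorem jedi_gradient {n m : ℕ} (hn : 2 ≤ n)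
    (α β : ℝ) (hα0 : 0 ≤ α) (hα1 : α ≤ 1) (hβ0 : 0 < β) (hβ1 : β < 1)
    (p' : Fin n → Fin n → ℝ)
    (hp_pos : ∀ i j, i ≠ j → 0 < p' i j)
    (hp_symm : ∀ i j, p' i j = p' j i)
    (hp_sum : ∑ i, ∑ j ∈ Finset.univ.filter (fun j => j ≠ i), p' i j = 1) :
    Differentiable ℝ (fun Y : Fin n → EuclideanSpace ℝ (Fin m) => jediJS α β p' Y) ∧
    ∀ (Y : Fin n → EuclideanSpace ℝ (Fin m)) (i : Fin n),
      HasGradientAt (fun z => jediJS α β p' (Function.update Y i z))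
        ((4 : ℝ) • ∑ j ∈ Finset.univ.filter (fun j => j ≠ i),
          ((1 + ‖Y i - Y j‖ ^ 2)⁻¹ * qsim Y i j *
            (α * β * p' i j / (β * qsim Y i j + (1 - β) * p' i j)
              - (∑ k, ∑ l ∈ Finset.univ.filter (fun l => l ≠ k),
                  α * β * p' k l * qsim Y k l / (β * qsim Y k l + (1 - β) * p' k l))
              + (1 - α) *
                (-(1 + Real.log (qsim Y i j))
                  + (1 - β) * qsim Y i j / (β * p' i j + (1 - β) * qsim Y i j)
                  + Real.log (β * p' i j + (1 - β) * qsim Y i j))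
              + (1 - α) *
                (∑ k, ∑ l ∈ Finset.univ.filter (fun l => l ≠ k),
                  qsim Y k l *
                    (1 + Real.log (qsim Y k l)
                      - (1 - β) * qsim Y k l / (β * p' k l + (1 - β) * qsim Y k l)
                      - Real.log (β * p' k l + (1 - β) * qsim Y k l))))) •
            (Y i - Y j))
        (Y i) :=
  jedi_gradient_general hn α β hβ0 hβ1 p' hp_pos hp_symm
end
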